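/- Let N = 2 and β, β′ ∈ ℝ, and let ρ be a density matrix on ℂ²⊗ℂ² with L*(ρ) = 0 for the two-bath adjoint Lindblad generator (baths at sites 1 and 2). Then the local states of ρ are: for every 2×2 matrix A, Tr(ρ·(A⊗I)) = Tr(ρ^{(1)}·A) and Tr(ρ·(I⊗A)) = Tr(ρ^{(2)}·A), where ρ^{(1)} = (ρ_β+ρ_{β′})/2 + (1/2)·(ρ_β−ρ_{β′})/2 and ρ^{(2)} = (ρ_β+ρ_{β′})/2 + (1/2)·(ρ_{β′}−ρ_β)/2. -/

import Mathlib

open Matrix Complex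
open scoped Kronecker ComplexOrder

noncomputable section

def sx : Matrix (Fin 2) (Fin 2) ℂ := !![0, 1; 1, 0]
def sy : Matrix (Fin 2) (Fin 2) ℂ := !![0, -Complex.I; Complex.I, 0]
def sz : Matrix (Fin 2) (Fin 2) ℂ := !![1, 0; 0, -1]
def sp : Matrix (Fin 2) (Fin 2) ℂ := !![0, 1; 0, 0]
def sm : Matrix (Fin 2) (Fin 2) ℂ := !![0, 0; 1, 0]
def np : Matrix (Fin 2) (Fin 2) ℂ := !![1, 0; 0, 0]
def nm : Matrix (Fin 2) (Fin 2) ℂ := !![0, 0; 0, 1]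

/-- `β₀ = e^{-β}/(e^{-β}+e^{β})`. -/
def b0 (β : ℝ) : ℝ := Real.exp (-β) / (Real.exp (-β) + Real.exp β)

/-- `β₁ = e^{β}/(e^{-β}+e^{β})`. -/
def b1 (β : ℝ) : ℝ := Real.exp β / (Real.exp (-β) + Real.exp β)

/-- The single-spin Gibbs state `ρ_β = diag(β₀, β₁)`. -/
def rhoB (β : ℝ) : Matrix (Fin 2) (Fin 2) ℂ := !![(b0 β : ℂ), 0; 0, (b1 β : ℂ)]

/-- The `N = 2` chain Hamiltonian `H_S = σz⊗I + I⊗σz + σx⊗σx + σy⊗σy`. -/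
def HS2 : Matrix (Fin 2 × Fin 2) (Fin 2 × Fin 2) ℂ :=
  sz ⊗ₖ (1 : Matrix (Fin 2) (Fin 2) ℂ) + (1 : Matrix (Fin 2) (Fin 2) ℂ) ⊗ₖ sz +
    sx ⊗ₖ sx + sy ⊗ₖ sy

/-- The two-bath adjoint Lindblad generator for `N = 2` (baths at sites 1 and 2). -/
def L2star (β β' : ℝ) (ρ : Matrix (Fin 2 × Fin 2) (Fin 2 × Fin 2) ℂ) :
    Matrix (Fin 2 × Fin 2) (Fin 2 × Fin 2) ℂ :=
  (-Complex.I) • (HS2 * ρ - ρ * HS2) +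
    (2 * b0 β : ℂ) • (2 • ((sp ⊗ₖ (1 : Matrix (Fin 2) (Fin 2) ℂ)) * ρ *
        (sm ⊗ₖ (1 : Matrix (Fin 2) (Fin 2) ℂ))) -
      ((nm ⊗ₖ (1 : Matrix (Fin 2) (Fin 2) ℂ)) * ρ + ρ * (nm ⊗ₖ (1 : Matrix (Fin 2) (Fin 2) ℂ)))) +
    (2 * b1 β : ℂ) • (2 • ((sm ⊗ₖ (1 : Matrix (Fin 2) (Fin 2) ℂ)) * ρ *
        (sp ⊗ₖ (1 : Matrix (Fin 2) (Fin 2) ℂ))) -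
      ((np ⊗ₖ (1 : Matrix (Fin 2) (Fin 2) ℂ)) * ρ + ρ * (np ⊗ₖ (1 : Matrix (Fin 2) (Fin 2) ℂ)))) +
    (2 * b0 β' : ℂ) • (2 • (((1 : Matrix (Fin 2) (Fin 2) ℂ) ⊗ₖ sp) * ρ *
        ((1 : Matrix (Fin 2) (Fin 2) ℂ) ⊗ₖ sm)) -
      (((1 : Matrix (Fin 2) (Fin 2) ℂ) ⊗ₖ nm) * ρ + ρ * ((1 : Matrix (Fin 2) (Fin 2) ℂ) ⊗ₖ nm))) +
    (2 * b1 β' : ℂ) • (2 • (((1 : Matrix (Fin 2) (Fin 2) ℂ) ⊗ₖ sm) * ρ *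
        ((1 : Matrix (Fin 2) (Fin 2) ℂ) ⊗ₖ sp)) -
      (((1 : Matrix (Fin 2) (Fin 2) ℂ) ⊗ₖ np) * ρ + ρ * ((1 : Matrix (Fin 2) (Fin 2) ℂ) ⊗ₖ np)))

/-!
Evaluating `L*(ρ) = 0` on suitable sums of entries of `ρ` gives closed linear systems for the
one-site marginals. The populations `ρ⁽¹⁾₀₀`, `ρ⁽²⁾₀₀` couple only to the spin current
`ρ₍₁₀₎₍₀₁₎ - ρ₍₀₁₎₍₁₀₎`, and together with `Tr ρ = 1` they are uniquely determined. The coherences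
`ρ⁽¹⁾₁₀`, `ρ⁽²⁾₁₀` couple to each other through two-site coherences; eliminating those leaves a
2×2 system with determinant `(8 + 6i)² - 16 (2β₀ - 1)(2β₀′ - 1)`, whose imaginary part is `96`, so
the coherences vanish. Hermiticity of the marginals gives the remaining entries.
-/

namespace Matrix

variable {m n R : Type*}

def traceRight [Fintype n] [AddCommMonoid R] (ρ : Matrix (m × n) (m × n) R) : Matrix m m R :=
  of fun i j => ∑ k, ρ (i, k) (j, k)

def traceLeft [Fintype m] [AddCommMonoid R] (ρ : Matrix (m × n) (m × n) R) : Matrix n n R :=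
  of fun k l => ∑ i, ρ (i, k) (i, l)

theorem trace_traceRight [Fintype m] [Fintype n] [AddCommMonoid R]
    (ρ : Matrix (m × n) (m × n) R) :
    (traceRight ρ).trace = ρ.trace := by
  simp [trace, traceRight, Fintype.sum_prod_type]

theorem trace_traceLeft [Fintype m] [Fintype n] [AddCommMonoid R]
    (ρ : Matrix (m × n) (m × n) R) :
    (traceLeft ρ).trace = ρ.trace := by
  simp only [trace, traceLeft, diag_apply, of_apply, Fintype.sum_prod_type]
  exact Finset.sum_comm

theorem conjTranspose_traceRight [Fintype n] [AddCommMonoid R] [StarAddMonoid R]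
    (ρ : Matrix (m × n) (m × n) R) : (traceRight ρ)ᴴ = traceRight ρᴴ := by
  ext i j
  simp [traceRight, star_sum]

theorem conjTranspose_traceLeft [Fintype m] [AddCommMonoid R] [StarAddMonoid R]
    (ρ : Matrix (m × n) (m × n) R) : (traceLeft ρ)ᴴ = traceLeft ρᴴ := by
  ext i j
  simp [traceLeft, star_sum]

theorem IsHermitian.traceRight [Fintype n] [AddCommMonoid R] [StarAddMonoid R]
    {ρ : Matrix (m × n) (m × n) R} (h : ρ.IsHermitian) : (traceRight ρ).IsHermitian := by
  rw [IsHermitian, conjTranspose_traceRight, h]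

theorem IsHermitian.traceLeft [Fintype m] [AddCommMonoid R] [StarAddMonoid R]
    {ρ : Matrix (m × n) (m × n) R} (h : ρ.IsHermitian) : (traceLeft ρ).IsHermitian := by
  rw [IsHermitian, conjTranspose_traceLeft, h]

theorem trace_mul_kronecker_one [Fintype m] [Fintype n] [DecidableEq n] [NonAssocSemiring R]
    (ρ : Matrix (m × n) (m × n) R) (A : Matrix m m R) :
    (ρ * (A ⊗ₖ (1 : Matrix n n R))).trace = (traceRight ρ * A).trace := by
  simp only [trace, diag_apply, mul_apply, kroneckerMap_apply, one_apply, mul_ite, mul_one,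
    mul_zero, Fintype.sum_prod_type, Finset.sum_ite_eq', Finset.mem_univ, ↓reduceIte, traceRight,
    of_apply, Finset.sum_mul]
  exact Finset.sum_congr rfl fun _ _ => Finset.sum_comm

theorem trace_mul_one_kronecker [Fintype m] [Fintype n] [DecidableEq m] [NonAssocSemiring R]
    (ρ : Matrix (m × n) (m × n) R) (A : Matrix n n R) :
    (ρ * ((1 : Matrix m m R) ⊗ₖ A)).trace = (traceLeft ρ * A).trace := by
  simp only [trace, diag_apply, mul_apply, kroneckerMap_apply, one_apply, ite_mul, one_mul,
    zero_mul, mul_ite, mul_zero, Fintype.sum_prod_type, Finset.sum_ite_irrel, Finset.sum_const_zero,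
    Finset.sum_ite_eq', Finset.mem_univ, ↓reduceIte, traceLeft, of_apply, Finset.sum_mul]
  rw [Finset.sum_comm]
  exact Finset.sum_congr rfl fun _ _ => Finset.sum_comm

theorem IsHermitian.eq_diag_of_trace_eq_one {R : Type*} [Ring R] [StarRing R]
    {M : Matrix (Fin 2) (Fin 2) R} (hM : M.IsHermitian) (htr : M.trace = 1) (h10 : M 1 0 = 0) :
    M = !![M 0 0, 0; 0, 1 - M 0 0] := by
  have h01 : M 0 1 = 0 := by rw [← hM.apply, h10, star_zero]
  have h11 : M 1 1 = 1 - M 0 0 := by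
    rw [trace_fin_two] at htr
    rw [← htr, add_sub_cancel_left]
  ext i j
  fin_cases i <;> fin_cases j <;> simp [h01, h10, h11]

end Matrix

theorem b1_eq_one_sub_b0 (β : ℝ) : b1 β = 1 - b0 β := by
  rw [eq_sub_iff_add_eq', b0, b1, ← add_div, div_self (by positivity)]

section Entries

variable (β β' : ℝ) (ρ : Matrix (Fin 2 × Fin 2) (Fin 2 × Fin 2) ℂ)

theorem L2star_site₁_population :
    L2star β β' ρ (0, 0) (0, 0) + L2star β β' ρ (0, 1) (0, 1) =
      4 * (b0 β * ρ.trace - traceRight ρ 0 0) - 2 * I * (ρ (1, 0) (0, 1) - ρ (0, 1) (1, 0)) := by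
  simp [L2star, two_smul, HS2, sx, sy, sz, sp, sm, np, nm, mul_apply, one_apply, trace, traceRight,
    Fintype.sum_prod_type, b1_eq_one_sub_b0]
  ring

theorem L2star_site₂_population :
    L2star β β' ρ (0, 0) (0, 0) + L2star β β' ρ (1, 0) (1, 0) =
      4 * (b0 β' * ρ.trace - traceLeft ρ 0 0) + 2 * I * (ρ (1, 0) (0, 1) - ρ (0, 1) (1, 0)) := by
  simp [L2star, two_smul, HS2, sx, sy, sz, sp, sm, np, nm, mul_apply, one_apply, trace, traceLeft,
    Fintype.sum_prod_type, b1_eq_one_sub_b0]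
  ring

theorem L2star_current :
    L2star β β' ρ (1, 0) (0, 1) - L2star β β' ρ (0, 1) (1, 0) =
      -4 * (ρ (1, 0) (0, 1) - ρ (0, 1) (1, 0)) - 4 * I * (traceRight ρ 0 0 - traceLeft ρ 0 0) := by
  simp [L2star, two_smul, HS2, sx, sy, sz, sp, sm, np, nm, mul_apply, one_apply, traceLeft,
    traceRight, Fintype.sum_prod_type, b1_eq_one_sub_b0]
  ring

theorem L2star_site₁_coherence :
    L2star β β' ρ (1, 0) (0, 0) + L2star β β' ρ (1, 1) (0, 1) =
      (2 * I - 2) * traceRight ρ 1 0 - 2 * I * (ρ (0, 1) (0, 0) - ρ (1, 1) (1, 0)) := by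
  simp [L2star, two_smul, HS2, sx, sy, sz, sp, sm, np, nm, mul_apply, one_apply, traceRight,
    Fintype.sum_prod_type, b1_eq_one_sub_b0]
  ring

theorem L2star_site₂_coherence :
    L2star β β' ρ (0, 1) (0, 0) + L2star β β' ρ (1, 1) (1, 0) =
      (2 * I - 2) * traceLeft ρ 1 0 - 2 * I * (ρ (1, 0) (0, 0) - ρ (1, 1) (0, 1)) := by
  simp [L2star, two_smul, HS2, sx, sy, sz, sp, sm, np, nm, mul_apply, one_apply, traceLeft,
    Fintype.sum_prod_type, b1_eq_one_sub_b0]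
  ring

theorem L2star_site₁_coherence_imbalance :
    L2star β β' ρ (1, 0) (0, 0) - L2star β β' ρ (1, 1) (0, 1) =
      (2 * I - 6) * (ρ (1, 0) (0, 0) - ρ (1, 1) (0, 1)) + 4 * (2 * b0 β' - 1) * traceRight ρ 1 0
        - 2 * I * traceLeft ρ 1 0 := by
  simp [L2star, two_smul, HS2, sx, sy, sz, sp, sm, np, nm, mul_apply, one_apply, traceLeft,
    traceRight, Fintype.sum_prod_type, b1_eq_one_sub_b0]
  ring

theorem L2star_site₂_coherence_imbalance :
    L2star β β' ρ (0, 1) (0, 0) - L2star β β' ρ (1, 1) (1, 0) =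
      (2 * I - 6) * (ρ (0, 1) (0, 0) - ρ (1, 1) (1, 0)) + 4 * (2 * b0 β - 1) * traceLeft ρ 1 0
        - 2 * I * traceRight ρ 1 0 := by
  simp [L2star, two_smul, HS2, sx, sy, sz, sp, sm, np, nm, mul_apply, one_apply, traceLeft,
    traceRight, Fintype.sum_prod_type, b1_eq_one_sub_b0]
  ring

end Entries

section Stationary

variable {β β' : ℝ} {ρ : Matrix (Fin 2 × Fin 2) (Fin 2 × Fin 2) ℂ}

theorem populations_of_stationary (hs : L2star β β' ρ = 0) (htr : ρ.trace = 1) :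
    traceRight ρ 0 0 = (3 * b0 β + b0 β') / 4 ∧ traceLeft ρ 0 0 = (b0 β + 3 * b0 β') / 4 := by
  have h₁ := L2star_site₁_population β β' ρ
  have h₂ := L2star_site₂_population β β' ρ
  have hJ := L2star_current β β' ρ
  simp only [hs, Matrix.zero_apply, add_zero, sub_zero, htr, mul_one] at h₁ h₂ hJ
  constructor
  · linear_combination (3/16) * h₁ + (1/16) * h₂ - I/16 * hJ
      + (traceRight ρ 0 0 - traceLeft ρ 0 0) / 4 * I_sq
  · linear_combination (1/16) * h₁ + (3/16) * h₂ + I/16 * hJ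
      - (traceRight ρ 0 0 - traceLeft ρ 0 0) / 4 * I_sq

theorem coherences_of_stationary (hs : L2star β β' ρ = 0) :
    traceRight ρ 1 0 = 0 ∧ traceLeft ρ 1 0 = 0 := by
  have c₁ := L2star_site₁_coherence β β' ρ
  have c₂ := L2star_site₂_coherence β β' ρ
  have d₁ := L2star_site₁_coherence_imbalance β β' ρ
  have d₂ := L2star_site₂_coherence_imbalance β β' ρ
  simp only [hs, Matrix.zero_apply, add_zero, sub_zero] at c₁ c₂ d₁ d₂
  set s₁ := traceRight ρ 1 0
  set s₂ := traceLeft ρ 1 0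
  set D₁ := ρ (1, 0) (0, 0) - ρ (1, 1) (0, 1)
  set D₂ := ρ (0, 1) (0, 0) - ρ (1, 1) (1, 0)
  set u : ℂ := 2 * b0 β - 1
  set u' : ℂ := 2 * b0 β' - 1
  -- `c₁` and `c₂` give `D₂ = (1 + i) s₁` and `D₁ = (1 + i) s₂`
  have k₁ : (8 + 6 * I) * s₁ = 4 * u * s₂ := by
    linear_combination (1 + 3 * I) * c₁ + d₂ + 6 * (s₁ - D₂) * I_sq
  have k₂ : (8 + 6 * I) * s₂ = 4 * u' * s₁ := by
    linear_combination (1 + 3 * I) * c₂ + d₁ + 6 * (s₂ - D₁) * I_sq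
  have hdet : (8 + 6 * I) ^ 2 - 16 * u * u' ≠ 0 := fun h => by
    have := congrArg im h
    norm_num [u, u', sq] at this
  refine ⟨(mul_eq_zero.mp ?_).resolve_left hdet, (mul_eq_zero.mp ?_).resolve_left hdet⟩
  · linear_combination (8 + 6 * I) * k₁ + 4 * u * k₂
  · linear_combination (8 + 6 * I) * k₂ + 4 * u' * k₁

theorem traceRight_of_stationary (hherm : ρ.IsHermitian) (htr : ρ.trace = 1)
    (hs : L2star β β' ρ = 0) :
    traceRight ρ = (3 / 4 : ℂ) • rhoB β + (1 / 4 : ℂ) • rhoB β' := by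
  rw [hherm.traceRight.eq_diag_of_trace_eq_one (by rw [trace_traceRight, htr])
    (coherences_of_stationary hs).1, (populations_of_stationary hs htr).1]
  ext i j
  fin_cases i <;> fin_cases j <;> simp [rhoB, b1_eq_one_sub_b0] <;> ring

theorem traceLeft_of_stationary (hherm : ρ.IsHermitian) (htr : ρ.trace = 1)
    (hs : L2star β β' ρ = 0) :
    traceLeft ρ = (1 / 4 : ℂ) • rhoB β + (3 / 4 : ℂ) • rhoB β' := by
  rw [hherm.traceLeft.eq_diag_of_trace_eq_one (by rw [trace_traceLeft, htr])
    (coherences_of_stationary hs).2, (populations_of_stationary hs htr).2]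
  ext i j
  fin_cases i <;> fin_cases j <;> simp [rhoB, b1_eq_one_sub_b0] <;> ring

end Stationary

theorem local_states_N2_general (β β' : ℝ) (ρ : Matrix (Fin 2 × Fin 2) (Fin 2 × Fin 2) ℂ)
    (hherm : ρ.IsHermitian) (htr : ρ.trace = 1)
    (hstat : L2star β β' ρ = 0) :
    ∀ A : Matrix (Fin 2) (Fin 2) ℂ,
      (ρ * (A ⊗ₖ (1 : Matrix (Fin 2) (Fin 2) ℂ))).trace =
        ((((1 : ℂ) / 2) • (rhoB β + rhoB β') +
            ((1 : ℂ) / 2) • (((1 : ℂ) / 2) • (rhoB β - rhoB β'))) * A).trace ∧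
      (ρ * ((1 : Matrix (Fin 2) (Fin 2) ℂ) ⊗ₖ A)).trace =
        ((((1 : ℂ) / 2) • (rhoB β + rhoB β') +
            ((1 : ℂ) / 2) • (((1 : ℂ) / 2) • (rhoB β' - rhoB β))) * A).trace := by
  intro A
  rw [trace_mul_kronecker_one, trace_mul_one_kronecker, traceRight_of_stationary hherm htr hstat,
    traceLeft_of_stationary hherm htr hstat]
  constructor <;> congr 2 <;> module

/-- For `N = 2`, the local states of any stationary density matrix are
`ρ⁽¹⁾ = (ρ_β+ρ_{β'})/2 + ½·(ρ_β−ρ_{β'})/2` and `ρ⁽²⁾ = (ρ_β+ρ_{β'})/2 + ½·(ρ_{β'}−ρ_β)/2`. -/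
theorem local_states_N2 (β β' : ℝ) (ρ : Matrix (Fin 2 × Fin 2) (Fin 2 × Fin 2) ℂ)
    (hherm : ρ.IsHermitian) (hpos : ρ.PosSemidef) (htr : ρ.trace = 1)
    (hstat : L2star β β' ρ = 0) :
    ∀ A : Matrix (Fin 2) (Fin 2) ℂ,
      (ρ * (A ⊗ₖ (1 : Matrix (Fin 2) (Fin 2) ℂ))).trace =
        ((((1 : ℂ) / 2) • (rhoB β + rhoB β') +
            ((1 : ℂ) / 2) • (((1 : ℂ) / 2) • (rhoB β - rhoB β'))) * A).trace ∧
      (ρ * ((1 : Matrix (Fin 2) (Fin 2) ℂ) ⊗ₖ A)).trace =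
        ((((1 : ℂ) / 2) • (rhoB β + rhoB β') +
            ((1 : ℂ) / 2) • (((1 : ℂ) / 2) • (rhoB β' - rhoB β))) * A).trace :=
  local_states_N2_general β β' ρ hherm htr hstat
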